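/- Let (L, Φ, Σ) be a comonad over dom on the arrow category of a category C with pushouts. Given an L-coalgebra (f, s) with f : A → B and a morphism h : A → C in C, form the pushout g : C → D of f along h. Then g admits an L-coalgebra structure (g, t), given by the map t : D → Eg induced by the pushout from λ_g : C → Eg and E(h, k) ∘ s : B → Eg, such that the pushout square (h, k) : (f, s) → (g, t) is a morphism of L-coalgebras; moreover (h, k) is cocartesian for the projection dom ∘ U_L : L-Map → C. -/

import Mathlib

open CategoryTheory CategoryTheory.Limits

universe v u

variable {C : Type u} [Category.{v} C]

/-- A coalgebra structure (over `dom`) for a comonad `L` over `dom` on the arrow category. -/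
def IsCoalg (L : Comonad (Arrow C))
    (hL : L.toFunctor ⋙ Arrow.leftFunc = Arrow.leftFunc)
    {f : Arrow C} (θ : f ⟶ L.obj f) : Prop :=
  θ.left = eqToHom ((Functor.congr_obj hL f).symm) ∧
  θ ≫ L.ε.app f = 𝟙 f ∧
  θ ≫ L.δ.app f = θ ≫ L.map θ

/-!
A morphism of arrows out of the pushout `g` of `f` along `h` is determined by its domain component
and its composite with the pushout square `k : f ⟶ g`, because the codomain of `g` is a pushout.
Since `L` lies over `dom`, the domain components of coalgebra structures, of `L.map`, `ε` and `δ`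
are forced, so the domain components of both sides of each required equation agree automatically.
After precomposing with `k`, each coalgebra equation for `t` (and the morphism property of each
map induced out of `g`) becomes the corresponding equation for `s`, by naturality of `ε` and `δ`
and `k ≫ t = s ≫ L k`.
-/

noncomputable section PushoutArrow

variable (f : Arrow C) {X : C} (h : f.left ⟶ X) [HasPushout f.hom h]

abbrev pushoutArrow : Arrow C := Arrow.mk (pushout.inr f.hom h)

abbrev pushoutSquare : f ⟶ pushoutArrow f h :=
  Arrow.homMk (u := h) (v := pushout.inl f.hom h) pushout.condition.symm

variable {f h}

lemma pushoutArrow_hom_ext {e : Arrow C} {φ φ' : pushoutArrow f h ⟶ e}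
    (hleft : φ.left = φ'.left) (hsq : pushoutSquare f h ≫ φ = pushoutSquare f h ≫ φ') :
    φ = φ' := by
  refine Arrow.hom_ext _ _ hleft (pushout.hom_ext (congrArg CommaMorphism.right hsq) ?_)
  exact (Arrow.w φ).symm.trans ((congrArg (· ≫ e.hom) hleft).trans (Arrow.w φ'))

/-- The cocartesian lift of `w` along `dom` through `ψ`. -/
def pushoutArrowDesc {e : Arrow C} (ψ : f ⟶ e) (w : X ⟶ e.left) (hw : h ≫ w = ψ.left) :
    pushoutArrow f h ⟶ e :=
  Arrow.homMk (u := w) (v := pushout.desc ψ.right (w ≫ e.hom)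
    (by rw [← Arrow.w ψ, ← hw, Category.assoc])) (pushout.inr_desc _ _ _).symm

variable {e : Arrow C} (ψ : f ⟶ e) (w : X ⟶ e.left) (hw : h ≫ w = ψ.left)

@[simp]
lemma pushoutArrowDesc_left : (pushoutArrowDesc ψ w hw).left = w := rfl

lemma inl_pushoutArrowDesc_right :
    pushout.inl f.hom h ≫ (pushoutArrowDesc ψ w hw).right = ψ.right :=
  pushout.inl_desc _ _ _

lemma inr_pushoutArrowDesc_right :
    pushout.inr f.hom h ≫ (pushoutArrowDesc ψ w hw).right = w ≫ e.hom :=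
  pushout.inr_desc _ _ _

lemma pushoutSquare_comp_pushoutArrowDesc : pushoutSquare f h ≫ pushoutArrowDesc ψ w hw = ψ :=
  Arrow.hom_ext _ _ hw (inl_pushoutArrowDesc_right ψ w hw)

lemma eq_pushoutArrowDesc {φ : pushoutArrow f h ⟶ e} (hleft : φ.left = w)
    (hsq : pushoutSquare f h ≫ φ = ψ) : φ = pushoutArrowDesc ψ w hw :=
  pushoutArrow_hom_ext hleft (hsq.trans (pushoutSquare_comp_pushoutArrowDesc ψ w hw).symm)

end PushoutArrow

noncomputable section OverDom

variable (L : Comonad (Arrow C)) (hL : L.toFunctor ⋙ Arrow.leftFunc = Arrow.leftFunc)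

lemma Comonad.map_left_of_comp_leftFunc_eq {a b : Arrow C} (u : a ⟶ b) :
    (L.map u).left =
      eqToHom (show (L.obj a).left = a.left from Functor.congr_obj hL a) ≫ u.left ≫
        eqToHom (show b.left = (L.obj b).left from (Functor.congr_obj hL b).symm) :=
  Functor.congr_hom hL u

variable {L hL}

lemma IsCoalg.left_eq {f : Arrow C} {θ : f ⟶ L.obj f} (hθ : IsCoalg L hL θ) :
    θ.left = eqToHom (show f.left = (L.obj f).left from (Functor.congr_obj hL f).symm) :=
  hθ.1

variable {f : Arrow C} {θ : f ⟶ L.obj f} (hθ : IsCoalg L hL θ)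
  {X : C} (h : f.left ⟶ X) [HasPushout f.hom h]

def pushoutCoalg : pushoutArrow f h ⟶ L.obj (pushoutArrow f h) :=
  pushoutArrowDesc (θ ≫ L.map (pushoutSquare f h))
    (eqToHom (show X = (L.obj (pushoutArrow f h)).left from
      (Functor.congr_obj hL (pushoutArrow f h)).symm))
    (by simp [hθ.left_eq, Comonad.map_left_of_comp_leftFunc_eq L hL])

lemma pushoutSquare_comp_pushoutCoalg :
    pushoutSquare f h ≫ pushoutCoalg hθ h = θ ≫ L.map (pushoutSquare f h) :=
  pushoutSquare_comp_pushoutArrowDesc _ _ _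

lemma isCoalg_pushoutCoalg
    (hcounit : ∀ a : Arrow C,
      (L.ε.app a).left = eqToHom (show (L.obj a).left = a.left from Functor.congr_obj hL a))
    (hcomul : ∀ a : Arrow C,
      (L.δ.app a).left = eqToHom (show (L.obj a).left = (L.obj (L.obj a)).left from
        (Functor.congr_obj hL (L.obj a)).symm)) :
    IsCoalg L hL (pushoutCoalg hθ h) := by
  refine ⟨rfl, pushoutArrow_hom_ext ?_ ?_, pushoutArrow_hom_ext ?_ ?_⟩
  · simp [pushoutCoalg, hcounit]
  · rw [reassoc_of% pushoutSquare_comp_pushoutCoalg hθ h, L.ε.naturality, reassoc_of% hθ.2.1]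
    simp
  · simp [pushoutCoalg, hcomul, Comonad.map_left_of_comp_leftFunc_eq L hL]
  · calc pushoutSquare f h ≫ pushoutCoalg hθ h ≫ L.δ.app _
        = θ ≫ L.δ.app f ≫ L.map (L.map (pushoutSquare f h)) := by
          rw [reassoc_of% pushoutSquare_comp_pushoutCoalg hθ h, L.δ.naturality]
          rfl
      _ = θ ≫ L.map (pushoutSquare f h ≫ pushoutCoalg hθ h) := by
          rw [reassoc_of% hθ.2.2, ← L.map_comp, pushoutSquare_comp_pushoutCoalg]
      _ = _ := by rw [L.map_comp, reassoc_of% pushoutSquare_comp_pushoutCoalg]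

lemma pushoutArrowDesc_comp_eq_pushoutCoalg_comp_map {e : Arrow C} {θe : e ⟶ L.obj e}
    (hθe : IsCoalg L hL θe) {ψ : f ⟶ e} (hψ : ψ ≫ θe = θ ≫ L.map ψ) (w : X ⟶ e.left)
    (hw : h ≫ w = ψ.left) :
    pushoutArrowDesc ψ w hw ≫ θe = pushoutCoalg hθ h ≫ L.map (pushoutArrowDesc ψ w hw) := by
  refine pushoutArrow_hom_ext ?_ ?_
  · simp [hθe.left_eq, pushoutCoalg, Comonad.map_left_of_comp_leftFunc_eq L hL]
  · rw [reassoc_of% pushoutSquare_comp_pushoutArrowDesc, hψ,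
      reassoc_of% pushoutSquare_comp_pushoutCoalg, ← L.map_comp,
      pushoutSquare_comp_pushoutArrowDesc]

end OverDom

/-- `L`-coalgebras for a comonad over `dom` are stable under pushout: given
an `L`-coalgebra structure on `f : A → B` and `h : A → C`, the pushout `g : C → D` of `f`
along `h` carries an `L`-coalgebra structure `t`, induced by the pushout from `λ_g` and
`E(h, k) ∘ s`, making the pushout square a morphism of `L`-coalgebras which is moreover
cocartesian for the projection `dom ∘ U_L : L-Map → C`. -/
theorem stmt3 [HasPushouts C] (L : Comonad (Arrow C))
    (hL : L.toFunctor ⋙ Arrow.leftFunc = Arrow.leftFunc)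
    (hcounit : ∀ f : Arrow C, (L.ε.app f).left = eqToHom (Functor.congr_obj hL f))
    (hcomul : ∀ f : Arrow C,
      (L.δ.app f).left = eqToHom ((Functor.congr_obj hL (L.obj f)).symm))
    (f : Arrow C) (θ : f ⟶ L.obj f) (hθ : IsCoalg L hL θ)
    {Cobj : C} (h : f.left ⟶ Cobj) :
    ∃ θg : Arrow.mk (pushout.inr f.hom h) ⟶ L.obj (Arrow.mk (pushout.inr f.hom h)),
      IsCoalg L hL θg ∧
      -- the pushout square is a morphism of coalgebras
      (Arrow.homMk (u := h) (v := pushout.inl f.hom h) pushout.condition.symm ≫ θg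
          = θ ≫ L.map (Arrow.homMk (u := h) (v := pushout.inl f.hom h)
              pushout.condition.symm)) ∧
      -- the structure map is the one induced by the pushout
      (pushout.inr f.hom h ≫ θg.right =
        eqToHom ((Functor.congr_obj hL (Arrow.mk (pushout.inr f.hom h))).symm) ≫
          (L.obj (Arrow.mk (pushout.inr f.hom h))).hom) ∧
      (pushout.inl f.hom h ≫ θg.right =
        θ.right ≫ (L.map (Arrow.homMk (u := h) (v := pushout.inl f.hom h)
          pushout.condition.symm)).right) ∧
      -- the pushout square is cocartesian over `dom`
      (∀ (e : Arrow C) (θe : e ⟶ L.obj e), IsCoalg L hL θe →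
        ∀ (ψ : f ⟶ e), ψ ≫ θe = θ ≫ L.map ψ →
          ∀ (w : Cobj ⟶ e.left), h ≫ w = ψ.left →
            ∃! φ : Arrow.mk (pushout.inr f.hom h) ⟶ e,
              (φ ≫ θe = θg ≫ L.map φ) ∧ φ.left = w ∧
                Arrow.homMk (u := h) (v := pushout.inl f.hom h)
                  pushout.condition.symm ≫ φ = ψ) := by
  refine ⟨pushoutCoalg hθ h, isCoalg_pushoutCoalg hθ h hcounit hcomul,
    pushoutSquare_comp_pushoutCoalg hθ h, inr_pushoutArrowDesc_right _ _ _,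
    inl_pushoutArrowDesc_right _ _ _, ?_⟩
  intro e θe hθe ψ hψ w hw
  refine ⟨pushoutArrowDesc ψ w hw, ⟨?_, rfl, pushoutSquare_comp_pushoutArrowDesc ψ w hw⟩, ?_⟩
  · exact pushoutArrowDesc_comp_eq_pushoutCoalg_comp_map hθ h hθe hψ w hw
  · rintro φ ⟨-, hφw, hφψ⟩
    exact eq_pushoutArrowDesc ψ w hw hφw hφψ
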